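/- Fix a positive integer m, a Dyck word w of length 2m, and k < 2m with w_{k+1} = 1. Let G be a matching on [2m] with base w avoiding M_132, let G' = G[k] and G'' = G[k+1], and let x be the vertex joined to k+1 in G''. Then x is the minimum of its ∼-block in G'; moreover, for every stub y of G'' with y < x, the ∼-block of y in G'' equals the ∼-block of y in G', and all stubs of G'' greater than x form a single ∼-block of G''. -/

import Mathlib

/-- `G` is a matching on the vertex set `[n] = {1,…,n}`:
every edge has both endpoints in `[n]`, and every vertex of `[n]` has exactly one neighbour. -/
def IsMatchingOn (n : ℕ) (G : SimpleGraph ℕ) : Prop :=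
  (∀ u v : ℕ, G.Adj u v → 1 ≤ u ∧ u ≤ n ∧ 1 ≤ v ∧ v ≤ n) ∧
  (∀ v : ℕ, 1 ≤ v → v ≤ n → ∃! u : ℕ, G.Adj v u)

/-- `G` contains `H`: there is a monotone edge-preserving injection from the
vertices of `H` to those of `G`. -/
def ContainsPat (G H : SimpleGraph ℕ) : Prop :=
  ∃ f : ℕ → ℕ, StrictMono f ∧ ∀ u v : ℕ, H.Adj u v → G.Adj (f u) (f v)

/-- `w` (on positions `1,…,n`) is a Dyck word of length `n`: exactly half of its letters
are `1` (`true`), and every prefix has at most half of its letters equal to `1`. -/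
def IsDyckWord (n : ℕ) (w : ℕ → Bool) : Prop :=
  2 * ((Finset.Icc 1 n).filter fun i => w i = true).card = n ∧
  ∀ k : ℕ, k ≤ n → 2 * ((Finset.Icc 1 k).filter fun i => w i = true).card ≤ k

/-- The matching `G` on `[n]` has base `w`: `w i = 1` iff `i` is an r-vertex. -/
def HasBase (n : ℕ) (G : SimpleGraph ℕ) (w : ℕ → Bool) : Prop :=
  ∀ i : ℕ, 1 ≤ i → i ≤ n → (w i = true ↔ ∃ j : ℕ, j < i ∧ G.Adj i j)

/-- The matching `M_123` on `[6]`, with edges `{1,4},{2,5},{3,6}`. -/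
def M123 : SimpleGraph ℕ := SimpleGraph.fromRel fun u v => (u, v) ∈ [(1,4),(2,5),(3,6)]
/-- The matching `M_132` on `[6]`, with edges `{1,4},{2,6},{3,5}`. -/
def M132 : SimpleGraph ℕ := SimpleGraph.fromRel fun u v => (u, v) ∈ [(1,4),(2,6),(3,5)]
/-- The matching `M_213` on `[6]`, with edges `{1,5},{2,4},{3,6}`. -/
def M213 : SimpleGraph ℕ := SimpleGraph.fromRel fun u v => (u, v) ∈ [(1,5),(2,4),(3,6)]
/-- The matching `M_231` on `[6]`, with edges `{1,5},{2,6},{3,4}`. -/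
def M231 : SimpleGraph ℕ := SimpleGraph.fromRel fun u v => (u, v) ∈ [(1,5),(2,6),(3,4)]
/-- The matching `M_321` on `[6]`, with edges `{1,6},{2,5},{3,4}`. -/
def M321 : SimpleGraph ℕ := SimpleGraph.fromRel fun u v => (u, v) ∈ [(1,6),(2,5),(3,4)]

/-- The matching `C_k` on `[2k]`, with edges `{2i-1, 2i+2}` for `1 ≤ i < k`
together with the edge `{2, 2k-1}`. -/
def Ck (k : ℕ) : SimpleGraph ℕ :=
  SimpleGraph.fromRel fun u v =>
    (∃ i : ℕ, 1 ≤ i ∧ i < k ∧ u = 2*i - 1 ∧ v = 2*i + 2) ∨ (u = 2 ∧ v = 2*k - 1)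

/-- `G[k]`: the subgraph of `G` induced by the vertex set `[k]`. -/
def restrictG (G : SimpleGraph ℕ) (k : ℕ) : SimpleGraph ℕ :=
  SimpleGraph.fromRel fun u v => G.Adj u v ∧ u ≤ k ∧ v ≤ k

/-- A stub of a graph on `[k]`: an isolated vertex. -/
def IsStubOn (k : ℕ) (G : SimpleGraph ℕ) (v : ℕ) : Prop :=
  1 ≤ v ∧ v ≤ k ∧ ∀ u : ℕ, ¬ G.Adj v u

/-- The relation `∼`: `u ∼ v` iff `u = v` or some edge `{x,y}` satisfies
`x < u < y` and `x < v < y`. -/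
def SimRel (G : SimpleGraph ℕ) (u v : ℕ) : Prop :=
  u = v ∨ ∃ x y : ℕ, G.Adj x y ∧ x < u ∧ u < y ∧ x < v ∧ v < y

/-- The edges `{a,b}` and `{c,d}` (with `a < b`, `c < d`) cross. -/
def EdgesCross (a b c d : ℕ) : Prop :=
  (a < c ∧ c < b ∧ b < d) ∨ (c < a ∧ a < d ∧ d < b)

/-- The relation `≈`: `u ≈ v` iff `u = v` or there is a sequence of edges
`e_1,…,e_p` (`p ≥ 1`), consecutive ones crossing, with `e_1` spanning `u` and `e_p` spanning `v`. -/
def ApproxRel (G : SimpleGraph ℕ) (u v : ℕ) : Prop :=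
  u = v ∨ ∃ p : ℕ, 1 ≤ p ∧ ∃ x y : ℕ → ℕ,
    (∀ i : ℕ, i < p → x i < y i ∧ G.Adj (x i) (y i)) ∧
    (∀ i : ℕ, i + 1 < p → EdgesCross (x i) (y i) (x (i+1)) (y (i+1))) ∧
    x 0 < u ∧ u < y 0 ∧ x (p-1) < v ∧ v < y (p-1)

lemma rG_adj (G : SimpleGraph ℕ) (k u v : ℕ) :
    (restrictG G k).Adj u v ↔ G.Adj u v ∧ u ≤ k ∧ v ≤ k := by
  constructor
  · intro h
    rw [restrictG, SimpleGraph.fromRel_adj] at h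
    rcases h with ⟨hne, ⟨h1, h2, h3⟩ | ⟨h1, h2, h3⟩⟩
    · exact ⟨h1, h2, h3⟩
    · exact ⟨h1.symm, h3, h2⟩
  · rintro ⟨h1, h2, h3⟩
    rw [restrictG, SimpleGraph.fromRel_adj]
    exact ⟨h1.ne, Or.inl ⟨h1, h2, h3⟩⟩

private def patFun (v1 v2 v3 v4 v5 v6 : ℕ) : ℕ → ℕ
  | 0 => 0
  | 1 => v1
  | 2 => v2
  | 3 => v3
  | 4 => v4
  | 5 => v5
  | (n+6) => v6 + n

lemma m132 (G : SimpleGraph ℕ) (v1 v2 v3 v4 v5 v6 : ℕ)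
    (h0 : 1 ≤ v1) (h12 : v1 < v2) (h23 : v2 < v3) (h34 : v3 < v4)
    (h45 : v4 < v5) (h56 : v5 < v6)
    (e1 : G.Adj v1 v4) (e2 : G.Adj v2 v6) (e3 : G.Adj v3 v5) :
    ContainsPat G M132 := by
  refine ⟨patFun v1 v2 v3 v4 v5 v6, ?_, ?_⟩
  · apply strictMono_nat_of_lt_succ
    intro n
    match n with
    | 0 => simpa [patFun] using Nat.lt_of_lt_of_le Nat.zero_lt_one h0
    | 1 => simpa [patFun] using h12
    | 2 => simpa [patFun] using h23
    | 3 => simpa [patFun] using h34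
    | 4 => simpa [patFun] using h45
    | 5 => simpa [patFun] using h56
    | (n+6) => simp [patFun]
  · intro u v h
    rw [M132, SimpleGraph.fromRel_adj] at h
    simp only [List.mem_cons, List.not_mem_nil, or_false, Prod.mk.injEq] at h
    obtain ⟨-, h⟩ := h
    rcases h with (⟨rfl, rfl⟩ | ⟨rfl, rfl⟩ | ⟨rfl, rfl⟩) |
      (⟨rfl, rfl⟩ | ⟨rfl, rfl⟩ | ⟨rfl, rfl⟩)
    · exact e1
    · exact e2
    · exact e3
    · exact e1.symm
    · exact e2.symm
    · exact e3.symm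

/-- if `G` is a matching on `[2m]` with base `w` avoiding `M_132`,
`k < 2m`, `w_{k+1} = 1`, and `x` is joined to `k+1` in `G'' = G[k+1]`, then `x` is the
minimum of its `∼`-block in `G' = G[k]`; the `∼`-blocks of stubs `y < x` are unchanged;
and all stubs of `G''` greater than `x` form a single `∼`-block of `G''`. -/
theorem stmt10 (m k : ℕ) (hm : 0 < m) (w : ℕ → Bool) (hw : IsDyckWord (2*m) w)
    (hk : k < 2*m) (hwk : w (k+1) = true)
    (G : SimpleGraph ℕ) (hG : IsMatchingOn (2*m) G) (hbase : HasBase (2*m) G w)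
    (havoid : ¬ ContainsPat G M132)
    (x : ℕ) (hx : (restrictG G (k+1)).Adj x (k+1)) :
    (IsStubOn k (restrictG G k) x ∧
      ∀ y : ℕ, IsStubOn k (restrictG G k) y → SimRel (restrictG G k) x y → x ≤ y) ∧
    (∀ y : ℕ, IsStubOn (k+1) (restrictG G (k+1)) y → y < x →
      {z : ℕ | IsStubOn (k+1) (restrictG G (k+1)) z ∧ SimRel (restrictG G (k+1)) y z} =
      {z : ℕ | IsStubOn k (restrictG G k) z ∧ SimRel (restrictG G k) y z}) ∧
    (∀ z : ℕ, IsStubOn (k+1) (restrictG G (k+1)) z → x < z →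
      {z' : ℕ | IsStubOn (k+1) (restrictG G (k+1)) z' ∧ SimRel (restrictG G (k+1)) z z'} =
      {z' : ℕ | IsStubOn (k+1) (restrictG G (k+1)) z' ∧ x < z'}) := by
  obtain ⟨hGb, hGu⟩ := hG
  rw [rG_adj] at hx
  obtain ⟨hxadj, hxle, -⟩ := hx
  have hxne : x ≠ k + 1 := hxadj.ne
  have hxk : x ≤ k := by omega
  have hx1 : 1 ≤ x := (hGb x (k+1) hxadj).1
  have huniq : ∀ v u u' : ℕ, G.Adj v u → G.Adj v u' → u = u' := by
    intro v u u' ha hb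
    obtain ⟨t, -, ht⟩ := hGu v (hGb v u ha).1 (hGb v u ha).2.1
    rw [ht u ha, ht u' hb]
  have hstub : ∀ j z, j ≤ 2*m → IsStubOn j (restrictG G j) z →
      ∃ t, G.Adj z t ∧ j < t := by
    rintro j z hj ⟨h1, h2, h3⟩
    obtain ⟨t, ht, -⟩ := hGu z h1 (h2.trans hj)
    refine ⟨t, ht, ?_⟩
    by_contra h
    exact h3 t ((rG_adj G j z t).2 ⟨ht, h2, by omega⟩)
  have key : ∀ a b y t : ℕ, G.Adj a b → G.Adj y t → a < y → y < x → x < b →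
      b < k + 1 → k + 1 < t → False := by
    intro a b y t hab hyt h1 h2 h3 h4 h5
    exact havoid (m132 G a y x b (k+1) t (hGb a b hab).1 h1 h2 h3 h4 h5 hab hyt hxadj)
  have hxstub : IsStubOn k (restrictG G k) x := by
    refine ⟨hx1, hxk, fun u hu => ?_⟩
    rw [rG_adj] at hu
    have := huniq x u (k+1) hu.1 hxadj
    omega
  -- minimality of x in its ∼-block of G'
  have hAmin : ∀ y, IsStubOn k (restrictG G k) y → SimRel (restrictG G k) x y → x ≤ y := by
    intro y hy hsim
    rcases hsim with h | ⟨a, b, hab, h1, h2, h3, h4⟩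
    · omega
    by_contra hlt
    push_neg at hlt
    rw [rG_adj] at hab
    obtain ⟨t, ht, htgt⟩ := hstub k y (by omega) hy
    have htne : t ≠ k + 1 := by
      rintro rfl
      have := huniq (k+1) y x ht.symm hxadj.symm
      omega
    exact key a b y t hab.1 ht h3 hlt h2 (by omega) (by omega)
  -- edges of G'' are edges of G' plus {x, k+1}
  have hG''adj : ∀ u v, (restrictG G (k+1)).Adj u v →
      (restrictG G k).Adj u v ∨ (u = x ∧ v = k+1) ∨ (u = k+1 ∧ v = x) := by
    intro u v h
    rw [rG_adj] at h
    obtain ⟨h1, h2, h3⟩ := h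
    by_cases hv : v = k + 1
    · subst hv
      exact Or.inr (Or.inl ⟨huniq (k+1) u x h1.symm hxadj.symm, rfl⟩)
    by_cases hu : u = k + 1
    · subst hu
      exact Or.inr (Or.inr ⟨rfl, huniq (k+1) v x h1 hxadj.symm⟩)
    · exact Or.inl ((rG_adj G k u v).2 ⟨h1, by omega, by omega⟩)
  have mono : ∀ u v, (restrictG G k).Adj u v → (restrictG G (k+1)).Adj u v := by
    intro u v h
    rw [rG_adj] at h ⊢
    exact ⟨h.1, by omega, by omega⟩
  have hxG'' : (restrictG G (k+1)).Adj x (k+1) :=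
    (rG_adj G (k+1) x (k+1)).2 ⟨hxadj, by omega, le_refl _⟩
  have hstub''le : ∀ z, IsStubOn (k+1) (restrictG G (k+1)) z → z ≤ k := by
    rintro z ⟨h1, h2, h3⟩
    by_contra h
    have hz : z = k + 1 := by omega
    subst hz
    exact h3 x hxG''.symm
  have hstub''nx : ∀ z, IsStubOn (k+1) (restrictG G (k+1)) z → z ≠ x := by
    rintro z ⟨h1, h2, h3⟩ rfl
    exact h3 (k+1) hxG''
  have hstub''' : ∀ z, IsStubOn (k+1) (restrictG G (k+1)) z → IsStubOn k (restrictG G k) z := by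
    intro z hz
    exact ⟨hz.1, hstub''le z hz, fun u hu => hz.2.2 u (mono z u hu)⟩
  have hstub'up : ∀ z, IsStubOn k (restrictG G k) z → z ≠ x →
      IsStubOn (k+1) (restrictG G (k+1)) z := by
    rintro z ⟨h1, h2, h3⟩ hne
    refine ⟨h1, by omega, fun u hu => ?_⟩
    rcases hG''adj z u hu with h | ⟨rfl, rfl⟩ | ⟨h', -⟩
    · exact h3 u h
    · exact hne rfl
    · omega
  have simmono : ∀ u v, SimRel (restrictG G k) u v → SimRel (restrictG G (k+1)) u v := by
    rintro u v (h | ⟨a, b, hab, h1, h2, h3, h4⟩)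
    · exact Or.inl h
    · exact Or.inr ⟨a, b, mono a b hab, h1, h2, h3, h4⟩
  refine ⟨⟨hxstub, hAmin⟩, ?_, ?_⟩
  · -- part B
    intro y hy hyx
    have hyG' : IsStubOn k (restrictG G k) y := hstub''' y hy
    ext z
    simp only [Set.mem_setOf_eq]
    constructor
    · rintro ⟨hz, hsim⟩
      refine ⟨hstub''' z hz, ?_⟩
      rcases hsim with h | ⟨a, b, hab, h1, h2, h3, h4⟩
      · exact Or.inl h
      rcases hG''adj a b hab with h | ⟨rfl, rfl⟩ | ⟨rfl, rfl⟩
      · exact Or.inr ⟨a, b, h, h1, h2, h3, h4⟩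
      · omega
      · omega
    · rintro ⟨hz, hsim⟩
      have hzne : z ≠ x := by
        rintro rfl
        have hs : SimRel (restrictG G k) z y := by
          rcases hsim with h | ⟨a, b, hab, h1, h2, h3, h4⟩
          · exact Or.inl h.symm
          · exact Or.inr ⟨a, b, hab, h3, h4, h1, h2⟩
        have := hAmin y hyG' hs
        omega
      exact ⟨hstub'up z hz hzne, simmono y z hsim⟩
  · -- part C
    intro z hz hxz
    have hzk : z ≤ k := hstub''le z hz
    ext z'
    simp only [Set.mem_setOf_eq]
    constructor
    · rintro ⟨hz', hsim⟩
      refine ⟨hz', ?_⟩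
      rcases hsim with h | ⟨a, b, hab, h1, h2, h3, h4⟩
      · omega
      have hz'nx : z' ≠ x := hstub''nx z' hz'
      rcases Nat.lt_or_ge x z' with h | h
      · exact h
      have hz'x : z' < x := by omega
      rcases hG''adj a b hab with hG' | ⟨rfl, rfl⟩ | ⟨rfl, rfl⟩
      · rw [rG_adj] at hG'
        obtain ⟨t', ht', ht'gt⟩ := hstub (k+1) z' (by omega) hz'
        exact absurd (key a b z' t' hG'.1 ht' h3 hz'x (by omega) (by omega) (by omega)) not_false
      · omega
      · omega
    · rintro ⟨hz', hxz'⟩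
      have hz'k : z' ≤ k := hstub''le z' hz'
      exact ⟨hz', Or.inr ⟨x, k+1, hxG'', hxz, by omega, hxz', by omega⟩⟩
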